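/- Let L ≥ 1 be an integer, m > 0, μ > 0, a > 0, b > 0, p > 0, N₀ > 0 and γ > 0. Let X and Z be independent real random variables on a probability space, where X is exponentially distributed with mean m and Z has the Gamma (Erlang) distribution with integer shape L and scale μ. Set u = γ·p/(a·m) and v = (γ·N₀ + b)/(a·m). Then Pr[ (aX − b)⁺ < γ·(p·Z + N₀) ] = 1 − exp(−v) / (1 + u·μ)^L. (This is the outage probability with co-located primary transmit antennas and an equal number of secondary transmit and receive antennas, M = N.) -/

import Mathlib

/-!
The complementary event is `X ≥ t(Z)` with `t(z) = (γ(pz + N₀) + b)/a ≥ 0`. Conditioning on `Z`,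
the exponential tail gives `Pr[X ≥ t(z)] = e^{-(v + uz)}`, so the complement has probability
`e^{-v} · E[e^{-uZ}]`. Tilting the Gamma density of rate `r = 1/μ` by `e^{-uz}` yields
`(r/(r+u))^L` times the Gamma density of rate `r + u`, hence `E[e^{-uZ}] = (1 + uμ)^{-L}`.
-/

open MeasureTheory ProbabilityTheory Real Set
open scoped ProbabilityTheory

lemma setOf_le_max_sub_zero_eq_Ici {a b c : ℝ} (ha : 0 < a) (hc : 0 < c) :
    {x : ℝ | c ≤ max (a * x - b) 0} = Ici ((c + b) / a) := by
  ext x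
  change c ≤ max (a * x - b) 0 ↔ (c + b) / a ≤ x
  rw [le_max_iff, or_iff_left (not_le.mpr hc), div_le_iff₀ ha]
  constructor <;> intro h <;> linarith

namespace ProbabilityTheory

lemma ae_nonneg_gammaMeasure (a r : ℝ) : ∀ᵐ z ∂gammaMeasure a r, 0 ≤ z := by
  simp only [ae_iff, not_le]
  change gammaMeasure a r (Iio 0) = 0
  rw [gammaMeasure, withDensity_apply _ measurableSet_Iio, lintegral_gammaPDF_of_nonpos le_rfl]

lemma expMeasure_Ici {r t : ℝ} (hr : 0 < r) (ht : 0 ≤ t) :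
    expMeasure r (Ici t) = ENNReal.ofReal (exp (-(r * t))) := by
  have := isProbabilityMeasure_expMeasure hr
  have hIio : expMeasure r (Iio t) = ENNReal.ofReal (1 - exp (-(r * t))) := by
    rw [expMeasure, gammaMeasure, withDensity_apply _ measurableSet_Iio,
      setLIntegral_congr Iio_ae_eq_Iic]
    exact (lintegral_exponentialPDF_eq_antiDeriv hr t).trans (by rw [if_pos ht])
  rw [← compl_Iio, prob_compl_eq_one_sub measurableSet_Iio, hIio,
    ENNReal.ofReal_sub _ (exp_nonneg _), ENNReal.ofReal_one,
    ENNReal.sub_sub_cancel ENNReal.one_ne_top]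
  rw [← ENNReal.ofReal_one]
  exact ENNReal.ofReal_le_ofReal (exp_le_one_iff.mpr (by nlinarith))

lemma expMeasure_setOf_le_max_sub_zero {r a b c : ℝ} (hr : 0 < r) (ha : 0 < a) (hb : 0 ≤ b)
    (hc : 0 < c) :
    expMeasure r {x : ℝ | c ≤ max (a * x - b) 0} = ENNReal.ofReal (exp (-(r * ((c + b) / a)))) := by
  rw [setOf_le_max_sub_zero_eq_Ici ha hc, expMeasure_Ici hr (by positivity)]

lemma measurable_gammaPDF (a r : ℝ) : Measurable (gammaPDF a r) :=
  (measurable_gammaPDFReal a r).ennreal_ofReal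

lemma gammaPDF_mul_exp_neg_mul {a r u : ℝ} (hr : 0 ≤ r) (hru : 0 < r + u) (z : ℝ) :
    gammaPDF a r z * ENNReal.ofReal (exp (-(u * z)))
      = ENNReal.ofReal ((r / (r + u)) ^ a) * gammaPDF a (r + u) z := by
  rcases lt_or_ge z 0 with hz | hz
  · rw [gammaPDF_of_neg hz, gammaPDF_of_neg hz, zero_mul, mul_zero]
  rw [gammaPDF_of_nonneg hz, gammaPDF_of_nonneg hz, ← ENNReal.ofReal_mul' (exp_nonneg _),
    ← ENNReal.ofReal_mul (by positivity)]
  have hrpow : (r / (r + u)) ^ a * (r + u) ^ a = r ^ a := by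
    rw [div_rpow hr hru.le, div_mul_cancel₀ _ (rpow_pos_of_pos hru a).ne']
  have hexp : exp (-(r * z)) * exp (-(u * z)) = exp (-((r + u) * z)) := by
    rw [← exp_add]
    ring_nf
  rw [← hrpow, ← hexp]
  ring_nf

lemma lintegral_exp_neg_mul_gammaMeasure {a r u : ℝ} (ha : 0 < a) (hr : 0 ≤ r)
    (hru : 0 < r + u) :
    ∫⁻ z, ENNReal.ofReal (exp (-(u * z))) ∂gammaMeasure a r
      = ENNReal.ofReal ((r / (r + u)) ^ a) := by
  rw [gammaMeasure,
    lintegral_withDensity_eq_lintegral_mul _ (measurable_gammaPDF a r) (by fun_prop)]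
  simp only [Pi.mul_apply, gammaPDF_mul_exp_neg_mul hr hru]
  rw [lintegral_const_mul _ (measurable_gammaPDF a _), lintegral_gammaPDF_eq_one ha hru, mul_one]

lemma IndepFun.measure_prodMk_preimage_eq_lintegral {Ω α β : Type*} [MeasurableSpace Ω]
    [MeasurableSpace α] [MeasurableSpace β] {P : Measure Ω} [IsFiniteMeasure P]
    {Y : Ω → α} {X : Ω → β} (hY : AEMeasurable Y P) (hX : AEMeasurable X P)
    (h : IndepFun Y X P) {S : Set (α × β)} (hS : MeasurableSet S) :
    P ((fun ω ↦ (Y ω, X ω)) ⁻¹' S) = ∫⁻ y, P.map X (Prod.mk y ⁻¹' S) ∂P.map Y := by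
  rw [← Measure.prod_apply hS, ← (indepFun_iff_map_prod_eq_prod_map_map hY hX).mp h,
    Measure.map_apply_of_aemeasurable (hY.prodMk hX) hS]

end ProbabilityTheory

/-- Outage probability with co-located primary transmit antennas and an equal number
of secondary transmit and receive antennas (`M = N`): `X` is exponential with mean
`m`, `Z` is Erlang with integer shape `L` and scale `μ`, `X` and `Z` are
independent, `u = γp/(am)` and `v = (γN₀ + b)/(am)`; then
`Pr[(aX − b)⁺ < γ(pZ + N₀)] = 1 − e^{−v} / (1 + u·μ)^L`. -/
theorem outage_probability_exponential_erlang
    {Ω : Type*} [MeasureSpace Ω] [IsProbabilityMeasure (ℙ : Measure Ω)]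
    {L : ℕ} (hL : 1 ≤ L) {m μ a b p N₀ γ : ℝ}
    (hm : 0 < m) (hμ : 0 < μ) (ha : 0 < a) (hb : 0 < b) (hp : 0 < p)
    (hN₀ : 0 < N₀) (hγ : 0 < γ)
    (X Z : Ω → ℝ) (hX : Measurable X) (hZ : Measurable Z)
    (hXlaw : Measure.map X ℙ = expMeasure m⁻¹)
    (hZlaw : Measure.map Z ℙ = gammaMeasure L μ⁻¹)
    (hindep : IndepFun X Z ℙ)
    (u v : ℝ) (hu : u = γ * p / (a * m)) (hv : v = (γ * N₀ + b) / (a * m)) :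
    (ℙ {ω | max (a * X ω - b) 0 < γ * (p * Z ω + N₀)}).toReal
      = 1 - Real.exp (-v) / (1 + u * μ) ^ L := by
  have hu₀ : 0 ≤ u := by rw [hu]; positivity
  set S : Set (ℝ × ℝ) := {q | γ * (p * q.1 + N₀) ≤ max (a * q.2 - b) 0} with hS_def
  have hS : MeasurableSet S := measurableSet_le (by fun_prop) (by fun_prop)
  have hslice : ∀ z, 0 ≤ z → expMeasure m⁻¹ (Prod.mk z ⁻¹' S)
      = ENNReal.ofReal (exp (-v)) * ENNReal.ofReal (exp (-(u * z))) := fun z hz ↦ by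
    have hexp : -v + -(u * z) = -(m⁻¹ * ((γ * (p * z + N₀) + b) / a)) := by
      rw [hu, hv]
      field_simp
      ring
    rw [← ENNReal.ofReal_mul (exp_nonneg _), ← exp_add, hexp]
    exact expMeasure_setOf_le_max_sub_zero (inv_pos.mpr hm) ha hb.le
      (by positivity : 0 < γ * (p * z + N₀))
  have hcompl : ℙ ((fun ω ↦ (Z ω, X ω)) ⁻¹' S)
      = ENNReal.ofReal (exp (-v)) * ENNReal.ofReal ((μ⁻¹ / (μ⁻¹ + u)) ^ (L : ℝ)) := by
    rw [hindep.symm.measure_prodMk_preimage_eq_lintegral hZ.aemeasurable hX.aemeasurable hS,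
      hXlaw, hZlaw, lintegral_congr_ae ((ae_nonneg_gammaMeasure _ _).mono hslice),
      lintegral_const_mul _ (by fun_prop),
      lintegral_exp_neg_mul_gammaMeasure (by exact_mod_cast hL) (by positivity) (by positivity)]
  have hrate : μ⁻¹ / (μ⁻¹ + u) = (1 + u * μ)⁻¹ := by field_simp
  calc (ℙ {ω | max (a * X ω - b) 0 < γ * (p * Z ω + N₀)}).toReal
      = 1 - (ℙ ((fun ω ↦ (Z ω, X ω)) ⁻¹' S)).toReal := by
        rw [← measureReal_def, ← measureReal_def, ← probReal_compl_eq_one_sub (hZ.prodMk hX hS)]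
        congr 1
        ext ω
        simp [hS_def]
    _ = 1 - Real.exp (-v) / (1 + u * μ) ^ L := by
        rw [hcompl, ENNReal.toReal_mul, ENNReal.toReal_ofReal (exp_nonneg _),
          ENNReal.toReal_ofReal (by positivity), hrate, rpow_natCast, inv_pow, div_eq_mul_inv]
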